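/- arXiv:1404.5045 — 2 statements merged into one kernel-verified Lean document; each statement's English description precedes it below -/
import Mathlib

section
/- Let A be a graded k-algebra and G a finite subgroup of graded algebra automorphisms of A with char k not dividing |G|, and e = (1/|G|) ∑_{g∈G} 1*g ∈ A*G. Then the map ψ: A → (A*G)e defined by ψ(a) = (a*1)e is an isomorphism of graded right A^G-modules, where the right A^G-module structure on (A*G)e is induced via the identification A^G ≅ e(A*G)e. -/
/-!
STATEMENT 1 (Lemma 1.5(2)): with the skew group algebra `A*G` axiomatized as a ring `B` with
structure maps `ι : A → B` (`a ↦ a*1`) and `κ : G → Bˣ` (`g ↦ 1*g`), and averaging idempotent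
`e`, the map `ψ : A → (A*G)e`, `ψ a = (a*1)e`, is an isomorphism of graded right
`A^G`-modules, where `A^G` acts on `(A*G)e` through the identification `A^G ≅ e(A*G)e`,
`c ↦ e(c*1)e`.
-/

theorem stmt_1
    (k : Type) [Field k]
    (A : Type) [Ring A] [Algebra k A]
    (𝒜 : ℕ → Submodule k A) [GradedAlgebra 𝒜]
    (G : Subgroup (A ≃ₐ[k] A)) [Fintype G]
    (hgr : ∀ g : G, ∀ i, ∀ a ∈ 𝒜 i, (g : A ≃ₐ[k] A) a ∈ 𝒜 i)
    (hchar : (Fintype.card G : k) ≠ 0)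
    -- the skew group algebra B = A*G, axiomatized
    (B : Type) [Ring B] [Algebra k B]
    (ℬ : ℕ → Submodule k B) [GradedAlgebra ℬ]
    (ι : A →ₐ[k] B) (κ : G →* Bˣ)
    (hskew : ∀ (g : G) (a : A), (κ g : B) * ι a = ι ((g : A ≃ₐ[k] A) a) * (κ g : B))
    (hbasis : ∀ b : B, ∃! c : G → A, b = ∑ g : G, ι (c g) * (κ g : B))
    (hιgr : ∀ i, ∀ a ∈ 𝒜 i, ι a ∈ ℬ i)
    (hκgr : ∀ g : G, (κ g : B) ∈ ℬ 0)
    (e : B) (he : e = (Fintype.card G : k)⁻¹ • ∑ g : G, (κ g : B)) :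
    -- ψ : A → (A*G)e, ψ a = (a*1)e is:
    -- additive and k-linear,
    (∀ a b : A, ι (a + b) * e = ι a * e + ι b * e) ∧
    (∀ (c : k) (a : A), ι (c • a) * e = c • (ι a * e)) ∧
    -- a right A^G-module homomorphism (A^G acting on (A*G)e via A^G ≅ e(A*G)e),
    (∀ a c : A, (∀ g : G, (g : A ≃ₐ[k] A) c = c) →
      ι (a * c) * e = (ι a * e) * (e * ι c * e)) ∧
    -- injective,
    (∀ a b : A, ι a * e = ι b * e → a = b) ∧
    -- surjective onto (A*G)e,
    (∀ b : B, ∃ a : A, ι a * e = b * e) ∧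
    -- and graded (degree-preserving).
    (∀ i, ∀ a ∈ 𝒜 i, ι a * e ∈ ℬ i) := by
  have hκe : ∀ g : G, (κ g : B) * e = e := by
    intro g
    rw [he, mul_smul_comm, Finset.mul_sum]
    congr 1
    have h1 : ∑ h : G, (κ g : B) * (κ h : B) = ∑ h : G, (κ (g * h) : B) :=
      Finset.sum_congr rfl fun h _ => by rw [← Units.val_mul, ← map_mul]
    rw [h1]
    exact Equiv.sum_comp (Equiv.mulLeft g) (fun h => (κ h : B))
  have hee : e * e = e := by
    nth_rewrite 1 [he]
    rw [smul_mul_assoc, Finset.sum_mul]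
    have h1 : ∑ g : G, (κ g : B) * e = ∑ _g : G, e :=
      Finset.sum_congr rfl fun g _ => hκe g
    rw [h1, Finset.sum_const, Finset.card_univ, ← Nat.cast_smul_eq_nsmul k, smul_smul,
      inv_mul_cancel₀ hchar, one_smul]
  have hcomm : ∀ c : A, (∀ g : G, (g : A ≃ₐ[k] A) c = c) → ι c * e = e * ι c := by
    intro c hc
    rw [he, mul_smul_comm, smul_mul_assoc, Finset.mul_sum, Finset.sum_mul]
    congr 1
    exact Finset.sum_congr rfl fun g _ => by rw [hskew g c, hc g]
  have hexp : ∀ a : A, ι a * e = ∑ g : G, ι ((Fintype.card G : k)⁻¹ • a) * (κ g : B) := by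
    intro a
    rw [he, mul_smul_comm, Finset.mul_sum, Finset.smul_sum]
    exact Finset.sum_congr rfl fun g _ => by rw [map_smul, smul_mul_assoc]
  refine ⟨?_, ?_, ?_, ?_, ?_, ?_⟩
  · intro a b; rw [map_add, add_mul]
  · intro c a; rw [map_smul, smul_mul_assoc]
  · intro a c hc
    have h1 : e * ι c * e = ι c * e := by rw [← hcomm c hc, mul_assoc, hee]
    rw [h1, mul_assoc, ← mul_assoc e, ← hcomm c hc, mul_assoc, hee, ← mul_assoc, ← map_mul]
  · intro a b hab
    obtain ⟨c, _, huniq⟩ := hbasis (ι a * e)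
    have h1 := huniq _ (hexp a)
    have h2 := huniq _ (by rw [hab]; exact hexp b)
    have h3 : (Fintype.card G : k)⁻¹ • a = (Fintype.card G : k)⁻¹ • b :=
      (congrFun h1 1).trans (congrFun h2 1).symm
    have := congrArg (fun x => (Fintype.card G : k) • x) h3
    simpa [smul_smul, mul_inv_cancel₀ hchar] using this
  · intro b
    obtain ⟨c, hc, _⟩ := hbasis b
    refine ⟨∑ g : G, c g, ?_⟩
    rw [hc, Finset.sum_mul, map_sum, Finset.sum_mul]
    exact Finset.sum_congr rfl fun g _ => by rw [mul_assoc, hκe]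
  · intro i a ha
    have he0 : e ∈ ℬ 0 := by
      rw [he]
      exact Submodule.smul_mem _ _ (Submodule.sum_mem _ fun g _ => hκgr g)
    simpa using SetLike.mul_mem_graded (hιgr i a ha) he0
end

section
/- Let A be a graded k-algebra and G a finite subgroup of graded algebra automorphisms of A with char k not dividing |G|, and e = (1/|G|) ∑_{g∈G} 1*g ∈ A*G. Then the map φ: A → e(A*G) defined by φ(a) = e(a*1) is an isomorphism of graded left A^G-modules, where the left A^G-module structure on e(A*G) is given by identifying A^G with e(A*G)e. -/
/-!
Since `e` absorbs every `κ g` on the right, `e (ι a κ g) = e ι(g⁻¹ a)`, so every element of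
`e(A*G)` has the form `e ι a`; and `e ι a = ∑ g, ι(|G|⁻¹ • g a) κ g` has coefficient
`|G|⁻¹ • a` at `g = 1`, so `a` is recovered from `e ι a` by the uniqueness of coefficients.
For `c ∈ A^G`, `ι c` commutes with every `κ g`, hence with `e`, which together with `e² = e`
makes `φ` linear over `A^G ≅ e(A*G)e`.
-/

section UnitsAverage

variable (k : Type*) {B G : Type*} [Semifield k] [Semiring B] [Algebra k B] [Group G] [Fintype G]

noncomputable def unitsAverage (κ : G →* Bˣ) : B :=
  (Fintype.card G : k)⁻¹ • ∑ g : G, (κ g : B)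

variable {k} (κ : G →* Bˣ)

theorem unitsAverage_mul_units (h : G) : unitsAverage k κ * κ h = unitsAverage k κ := by
  rw [unitsAverage, smul_mul_assoc, Finset.sum_mul]
  congr 1
  exact Fintype.sum_equiv (Equiv.mulRight h) _ _ fun g => by simp

theorem unitsAverage_mul_self (hchar : (Fintype.card G : k) ≠ 0) :
    unitsAverage k κ * unitsAverage k κ = unitsAverage k κ := by
  conv_lhs => arg 2; rw [unitsAverage]
  rw [mul_smul_comm, Finset.mul_sum, Finset.sum_congr rfl fun g _ => unitsAverage_mul_units κ g,
    Finset.sum_const, Finset.card_univ, ← Nat.cast_smul_eq_nsmul k, smul_smul,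
    inv_mul_cancel₀ hchar, one_smul]

theorem unitsAverage_commute {b : B} (hb : ∀ g, Commute (κ g : B) b) :
    Commute (unitsAverage k κ) b :=
  ((Commute.sum_left _ _ _ fun g _ => hb g).smul_left _)

theorem unitsAverage_mem {p : Submodule k B} (hp : ∀ g, (κ g : B) ∈ p) :
    unitsAverage k κ ∈ p :=
  p.smul_mem _ (p.sum_mem fun g _ => hp g)

end UnitsAverage

section SkewGroupAlgebra

variable {k A B : Type*} [Semifield k] [Semiring A] [Algebra k A] [Semiring B] [Algebra k B]
  {G : Subgroup (A ≃ₐ[k] A)}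

def IsCovariantPair (ι : A →ₐ[k] B) (κ : G →* Bˣ) : Prop :=
  ∀ (g : G) (a : A), (κ g : B) * ι a = ι ((g : A ≃ₐ[k] A) a) * (κ g : B)

variable [Fintype G] {ι : A →ₐ[k] B} {κ : G →* Bˣ}

theorem unitsAverage_mul_eq_sum (hskew : IsCovariantPair ι κ) (a : A) :
    unitsAverage k κ * ι a =
      ∑ g : G, ι ((Fintype.card G : k)⁻¹ • (g : A ≃ₐ[k] A) a) * (κ g : B) := by
  rw [unitsAverage, smul_mul_assoc, Finset.sum_mul, Finset.smul_sum]
  refine Finset.sum_congr rfl fun g _ => ?_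
  rw [hskew g, map_smul, smul_mul_assoc]

theorem injective_unitsAverage_mul (hskew : IsCovariantPair ι κ)
    (hindep : ∀ c c' : G → A,
      ∑ g : G, ι (c g) * (κ g : B) = ∑ g : G, ι (c' g) * (κ g : B) → c = c')
    (hchar : (Fintype.card G : k) ≠ 0) :
    Function.Injective fun a => unitsAverage k κ * ι a := by
  intro a b hab
  have hcoeff := congrFun (hindep _ _ <| by
    simpa only [unitsAverage_mul_eq_sum hskew] using hab) 1
  exact (smul_right_injective A (inv_ne_zero hchar)) hcoeff

theorem unitsAverage_mul_mul_units (hskew : IsCovariantPair ι κ) (g : G) (a : A) :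
    unitsAverage k κ * (ι a * κ g) = unitsAverage k κ * ι (((g⁻¹ : G) : A ≃ₐ[k] A) a) := by
  calc unitsAverage k κ * (ι a * κ g)
      = unitsAverage k κ * κ g⁻¹ * ι a * κ g := by
        rw [unitsAverage_mul_units, mul_assoc]
    _ = unitsAverage k κ * ι (((g⁻¹ : G) : A ≃ₐ[k] A) a) * (κ g⁻¹ * κ g : Bˣ) := by
        rw [mul_assoc _ _ (ι a), hskew, Units.val_mul]
        simp only [mul_assoc]
    _ = unitsAverage k κ * ι (((g⁻¹ : G) : A ≃ₐ[k] A) a) := by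
        rw [← map_mul, inv_mul_cancel, map_one, Units.val_one, mul_one]

theorem unitsAverage_mul_sum (hskew : IsCovariantPair ι κ) (c : G → A) :
    unitsAverage k κ * ∑ g : G, ι (c g) * (κ g : B) =
      unitsAverage k κ * ι (∑ g : G, ((g⁻¹ : G) : A ≃ₐ[k] A) (c g)) := by
  simp only [Finset.mul_sum, map_sum, unitsAverage_mul_mul_units hskew]

theorem unitsAverage_mul_mul_of_invariant (hskew : IsCovariantPair ι κ)
    (hchar : (Fintype.card G : k) ≠ 0) {c : A} (hc : ∀ g : G, (g : A ≃ₐ[k] A) c = c) (a : A) :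
    unitsAverage k κ * ι (c * a) =
      (unitsAverage k κ * ι c * unitsAverage k κ) * (unitsAverage k κ * ι a) := by
  set e := unitsAverage k κ
  have hce : Commute e (ι c) := unitsAverage_commute κ fun g => by
    rw [Commute, SemiconjBy, hskew, hc]
  have hee : e * e = e := unitsAverage_mul_self κ hchar
  calc e * ι (c * a) = ι c * e * ι a := by rw [map_mul, ← mul_assoc, hce.eq]
    _ = ι c * e * (e * ι a) := by rw [← mul_assoc (ι c * e) e, mul_assoc (ι c) e e, hee]
    _ = (e * ι c * e) * (e * ι a) := by rw [hce.eq, mul_assoc (ι c) e e, hee]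

end SkewGroupAlgebra

theorem stmt_2_general
    (k : Type) [Field k]
    (A : Type) [Ring A] [Algebra k A]
    (𝒜 : ℕ → Submodule k A)
    (G : Subgroup (A ≃ₐ[k] A)) [Fintype G]
    (hchar : (Fintype.card G : k) ≠ 0)
    -- the skew group algebra B = A*G, axiomatized
    (B : Type) [Ring B] [Algebra k B]
    (ℬ : ℕ → Submodule k B) [GradedAlgebra ℬ]
    (ι : A →ₐ[k] B) (κ : G →* Bˣ)
    (hskew : ∀ (g : G) (a : A), (κ g : B) * ι a = ι ((g : A ≃ₐ[k] A) a) * (κ g : B))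
    (hbasis : ∀ b : B, ∃! c : G → A, b = ∑ g : G, ι (c g) * (κ g : B))
    (hιgr : ∀ i, ∀ a ∈ 𝒜 i, ι a ∈ ℬ i)
    (hκgr : ∀ g : G, (κ g : B) ∈ ℬ 0)
    (e : B) (he : e = (Fintype.card G : k)⁻¹ • ∑ g : G, (κ g : B)) :
    -- φ : A → e(A*G), φ a = e(a*1) is:
    -- additive and k-linear,
    (∀ a b : A, e * ι (a + b) = e * ι a + e * ι b) ∧
    (∀ (c : k) (a : A), e * ι (c • a) = c • (e * ι a)) ∧
    -- a left A^G-module homomorphism (A^G acting on e(A*G) via A^G ≅ e(A*G)e),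
    (∀ c a : A, (∀ g : G, (g : A ≃ₐ[k] A) c = c) →
      e * ι (c * a) = (e * ι c * e) * (e * ι a)) ∧
    -- injective,
    (∀ a b : A, e * ι a = e * ι b → a = b) ∧
    -- surjective onto e(A*G),
    (∀ b : B, ∃ a : A, e * ι a = e * b) ∧
    -- and graded (degree-preserving).
    (∀ i, ∀ a ∈ 𝒜 i, e * ι a ∈ ℬ i) := by
  obtain rfl : e = unitsAverage k κ := he
  refine ⟨fun a b => by rw [map_add, mul_add], fun c a => by rw [map_smul, mul_smul_comm],
    fun c a hc => unitsAverage_mul_mul_of_invariant hskew hchar hc a,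
    injective_unitsAverage_mul hskew (fun c c' => (hbasis _).unique rfl) hchar, ?_, ?_⟩
  · intro b
    obtain ⟨c, rfl, -⟩ := hbasis b
    exact ⟨_, (unitsAverage_mul_sum hskew c).symm⟩
  · intro i a ha
    simpa only [zero_add] using
      SetLike.mul_mem_graded (unitsAverage_mem κ hκgr) (hιgr i a ha)

theorem stmt_2
    (k : Type) [Field k]
    (A : Type) [Ring A] [Algebra k A]
    (𝒜 : ℕ → Submodule k A) [GradedAlgebra 𝒜]
    (G : Subgroup (A ≃ₐ[k] A)) [Fintype G]
    (hgr : ∀ g : G, ∀ i, ∀ a ∈ 𝒜 i, (g : A ≃ₐ[k] A) a ∈ 𝒜 i)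
    (hchar : (Fintype.card G : k) ≠ 0)
    -- the skew group algebra B = A*G, axiomatized
    (B : Type) [Ring B] [Algebra k B]
    (ℬ : ℕ → Submodule k B) [GradedAlgebra ℬ]
    (ι : A →ₐ[k] B) (κ : G →* Bˣ)
    (hskew : ∀ (g : G) (a : A), (κ g : B) * ι a = ι ((g : A ≃ₐ[k] A) a) * (κ g : B))
    (hbasis : ∀ b : B, ∃! c : G → A, b = ∑ g : G, ι (c g) * (κ g : B))
    (hιgr : ∀ i, ∀ a ∈ 𝒜 i, ι a ∈ ℬ i)
    (hκgr : ∀ g : G, (κ g : B) ∈ ℬ 0)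
    (e : B) (he : e = (Fintype.card G : k)⁻¹ • ∑ g : G, (κ g : B)) :
    -- φ : A → e(A*G), φ a = e(a*1) is:
    -- additive and k-linear,
    (∀ a b : A, e * ι (a + b) = e * ι a + e * ι b) ∧
    (∀ (c : k) (a : A), e * ι (c • a) = c • (e * ι a)) ∧
    -- a left A^G-module homomorphism (A^G acting on e(A*G) via A^G ≅ e(A*G)e),
    (∀ c a : A, (∀ g : G, (g : A ≃ₐ[k] A) c = c) →
      e * ι (c * a) = (e * ι c * e) * (e * ι a)) ∧
    -- injective,
    (∀ a b : A, e * ι a = e * ι b → a = b) ∧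
    -- surjective onto e(A*G),
    (∀ b : B, ∃ a : A, e * ι a = e * b) ∧
    -- and graded (degree-preserving).
    (∀ i, ∀ a ∈ 𝒜 i, e * ι a ∈ ℬ i) :=
  stmt_2_general k A 𝒜 G hchar B ℬ ι κ hskew hbasis hιgr hκgr e he
end
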